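/- For every fixed natural number L and every real number μ ≠ 0, the limit as the positive integer α tends to infinity of ∑_{J=0}^{2α} (2J+1)/(J(J+1)+μ²) · (P_L(1 − J²/(2α²)) − 1) exists and equals −2·h(L), where h(L) = ∑_{k=1}^{L} 1/k. -/

import Mathlib

/-!
Writing `P_L(1 - u) = ∑ₖ aₖ (u / 2)ᵏ`, where `aₖ = (-1)ᵏ C(L, k) C(L + k, L)` are the coefficients
of the shifted Legendre polynomial, the sum becomes `∑_{k ≥ 1} aₖ ∑_J w(J) (J / 2α)^{2k}` with
`w(J) = (2J + 1) / (J(J + 1) + μ²) = 2 / J + O(1 / J²)`. Each inner sum is then a Riemann sum for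
`∫₀¹ 2 x^{2k-1} dx = 1 / k`, so the limit is `∑_{k=1}^L aₖ / k`. This equals `-2 h(L)`: passing from
`L` to `L + 1` changes it by `2 / (L + 1)` times an alternating binomial sum, which is an
`(L + 1)`-st forward difference of a polynomial of degree `L` and so equals `-1` once its `k = 0`
term is removed.
-/

open Filter Finset Polynomial Topology fwdDiff

noncomputable def legendreP (L : ℕ) (x : ℝ) : ℝ :=
  (1 / ((2 : ℝ) ^ L * (Nat.factorial L : ℝ))) *
    iteratedDeriv L (fun t : ℝ => (t ^ 2 - 1) ^ L) x

noncomputable def harmonicR (L : ℕ) : ℝ := ∑ k ∈ Finset.range L, 1 / ((k : ℝ) + 1)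

theorem Polynomial.iteratedDeriv_aeval {R 𝕜 : Type*} [CommSemiring R] [NontriviallyNormedField 𝕜]
    [Algebra R 𝕜] (p : R[X]) (n : ℕ) :
    iteratedDeriv n (fun x : 𝕜 ↦ aeval x p) = fun x ↦ aeval x (derivative^[n] p) := by
  induction n with
  | zero => simp
  | succ n ih =>
    rw [iteratedDeriv_succ, ih, Function.iterate_succ_apply']
    funext x
    exact Polynomial.deriv_aeval _

/-- With `x = 1 - 2t` one has `(x² - 1)^L = (-4)^L tᴸ(1 - t)ᴸ`, so Rodrigues' formula for `P_L`
becomes the Rodrigues formula `factorial_mul_shiftedLegendre_eq`. -/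
theorem legendreP_eq_aeval_shiftedLegendre (L : ℕ) (x : ℝ) :
    legendreP L x = aeval ((1 - x) / 2) (shiftedLegendre L) := by
  set Q : ℤ[X] := X ^ L * (1 - X) ^ L
  have hsubst : (fun t : ℝ ↦ (t ^ 2 - 1) ^ L) =
      fun t ↦ (-4) ^ L * (fun z ↦ aeval (2⁻¹ + z) Q) (-2⁻¹ * t) := by
    funext t
    simp only [Q, map_mul, map_pow, aeval_X, map_sub, map_one, ← mul_pow]
    ring_nf
  have hQ : ContDiff ℝ L (fun z : ℝ ↦ aeval (2⁻¹ + z) Q) :=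
    (Q.contDiff_aeval _).comp (contDiff_const.add contDiff_id)
  rw [legendreP, hsubst, iteratedDeriv_const_mul_field, iteratedDeriv_comp_const_mul hQ,
    iteratedDeriv_comp_const_add L (fun w ↦ aeval w Q), Polynomial.iteratedDeriv_aeval,
    ← factorial_mul_shiftedLegendre_eq]
  simp only [map_mul, map_natCast]
  rw [show 2⁻¹ + -2⁻¹ * x = (1 - x) / 2 by ring]
  field_simp
  rw [← mul_pow]
  norm_num

theorem legendreP_one_sub_sub_one (L : ℕ) (u : ℝ) :
    legendreP L (1 - u) - 1 =
      ∑ k ∈ range L, ((shiftedLegendre L).coeff (k + 1) : ℝ) * (u / 2) ^ (k + 1) := by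
  rw [legendreP_eq_aeval_shiftedLegendre, aeval_eq_sum_range, natDegree_shiftedLegendre,
    sum_range_succ']
  simp [coeff_shiftedLegendre]

theorem alternating_sum_choose_mul_add_choose (L : ℕ) :
    ∑ m ∈ range (L + 2), (-1 : ℤ) ^ m * (L + 1).choose m * (L + m).choose L = 0 := by
  have hΔ : (Δ_[1])^[L + 1] (fun x : ℕ ↦ ((x + L).choose L : ℤ)) 0 = 0 := by
    have hchoose : (Δ_[1])^[L] (fun x : ℕ ↦ (x.choose L : ℤ)) = fun _ ↦ 1 := by
      simpa only [add_zero, Nat.choose_zero_right, Nat.cast_one] using fwdDiff_iter_choose 0 L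
    rw [fwdDiff_iter_comp_add (f := fun x : ℕ ↦ (x.choose L : ℤ)), Function.iterate_succ_apply',
      hchoose, fwdDiff_const]
  rw [fwdDiff_iter_eq_sum_shift] at hΔ
  calc _ = (-1) ^ (L + 1) * ∑ m ∈ range (L + 2),
        ((-1 : ℤ) ^ (L + 1 - m) * (L + 1).choose m) • ((0 + m • 1 + L).choose L : ℤ) := by
        rw [mul_sum]
        refine sum_congr rfl fun m hm ↦ ?_
        have hsign : (-1 : ℤ) ^ (L + 1) = (-1) ^ m * (-1) ^ (L + 1 - m) := by
          rw [← pow_add, Nat.add_sub_cancel' (Nat.lt_succ_iff.mp (mem_range.mp hm))]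
        have hsq : ((-1 : ℤ) ^ (L + 1 - m)) ^ 2 = 1 := by
          rw [← pow_mul, pow_mul', neg_one_sq, one_pow]
        rw [hsign, smul_eq_mul, zero_add, smul_eq_mul, mul_one, add_comm m L]
        linear_combination (-(-1) ^ m * ((L + 1).choose m : ℤ) * (L + m).choose L) * hsq
    _ = 0 := by rw [hΔ, mul_zero]

theorem succ_mul_coeff_shiftedLegendre_succ_sub (L m : ℕ) :
    (L + 1 : ℤ) * ((shiftedLegendre (L + 1)).coeff m - (shiftedLegendre L).coeff m) =
      2 * m * ((-1) ^ m * (L + 1).choose m * (L + m).choose L) := by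
  have h₁ : ((L + 1 + m).choose (L + 1) : ℤ) * (L + 1) = (L + m + 1) * (L + m).choose L := by
    rw [add_right_comm]
    exact_mod_cast (Nat.add_one_mul_choose_eq (L + m) L).symm
  rcases le_or_gt m (L + 1) with hm | hm
  · have h₂ : (L.choose m : ℤ) * (L + 1) = (L + 1).choose m * (L + 1 - m) := by
      have := congrArg (Nat.cast (R := ℤ)) (Nat.choose_mul_succ_eq L m)
      push_cast [Nat.cast_sub hm] at this
      exact this
    simp only [coeff_shiftedLegendre]
    linear_combination (-1) ^ m * ((L + 1).choose m : ℤ) * h₁ -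
      (-1) ^ m * ((L + m).choose L : ℤ) * h₂
  · simp [coeff_shiftedLegendre, Nat.choose_eq_zero_of_lt hm,
      Nat.choose_eq_zero_of_lt (by omega : L < m)]

theorem sum_coeff_shiftedLegendre_div (L : ℕ) :
    ∑ k ∈ range L, ((shiftedLegendre L).coeff (k + 1) : ℝ) / (k + 1) = -2 * harmonicR L := by
  induction L with
  | zero => simp [harmonicR]
  | succ L ih =>
    have hlast : (shiftedLegendre L).coeff (L + 1) = 0 :=
      coeff_eq_zero_of_natDegree_lt (by simp)
    have hstep : ∀ k ∈ range (L + 1),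
        ((shiftedLegendre (L + 1)).coeff (k + 1) : ℝ) / (k + 1) =
          (shiftedLegendre L).coeff (k + 1) / (k + 1) +
            2 / (L + 1) * ((-1) ^ (k + 1) * (L + 1).choose (k + 1) * (L + (k + 1)).choose L) := by
      intro k _
      have h := congrArg (Int.cast : ℤ → ℝ) (succ_mul_coeff_shiftedLegendre_succ_sub L (k + 1))
      push_cast at h
      field_simp
      linear_combination h
    have hsum : ∑ k ∈ range (L + 1),
        ((-1 : ℝ) ^ (k + 1) * (L + 1).choose (k + 1) * (L + (k + 1)).choose L) = -1 := by
      have h := congrArg (Int.cast : ℤ → ℝ) (alternating_sum_choose_mul_add_choose L)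
      rw [sum_range_succ'] at h
      simp only [Nat.choose_zero_right, add_zero, Nat.choose_self] at h
      push_cast at h
      linear_combination h
    rw [sum_congr rfl hstep, sum_add_distrib, ← mul_sum, hsum, sum_range_succ, hlast, ih]
    simp [harmonicR, sum_range_succ]
    ring

theorem tendsto_sum_range_succ_pow_div_pow (k : ℕ) :
    Tendsto (fun N : ℕ ↦ (∑ J ∈ range (N + 1), (J : ℝ) ^ k) / (N : ℝ) ^ (k + 1)) atTop
      (𝓝 (1 / (k + 1))) := by
  have hmono (N : ℕ) : MonotoneOn (fun x : ℝ ↦ x ^ k) (Set.Icc 0 (0 + N)) :=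
    pow_left_monotoneOn.mono fun x hx ↦ hx.1
  have hint (N : ℕ) : ∫ x in (0 : ℝ)..0 + N, x ^ k = (N : ℝ) ^ (k + 1) / (k + 1) := by
    simp [integral_pow]
  have hlower (N : ℕ) : (N : ℝ) ^ (k + 1) / (k + 1) ≤ ∑ J ∈ range (N + 1), (J : ℝ) ^ k := by
    have := (hmono N).integral_le_sum
    rw [hint] at this
    rw [sum_range_succ']
    push_cast at this ⊢
    simp only [zero_add] at this
    linarith [pow_nonneg (le_refl (0 : ℝ)) k]
  have hupper (N : ℕ) :
      ∑ J ∈ range (N + 1), (J : ℝ) ^ k ≤ (N : ℝ) ^ (k + 1) / (k + 1) + (N : ℝ) ^ k := by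
    have := (hmono N).sum_le_integral
    rw [hint] at this
    simp only [zero_add] at this
    rw [sum_range_succ]
    linarith
  have hbound : Tendsto (fun N : ℕ ↦ 1 / ((k : ℝ) + 1) + 1 / (N : ℝ)) atTop
      (𝓝 (1 / (k + 1))) := by
    simpa using tendsto_const_nhds.add (tendsto_one_div_atTop_nhds_zero_nat (𝕜 := ℝ))
  refine tendsto_of_tendsto_of_tendsto_of_le_of_le' tendsto_const_nhds hbound ?_ ?_
  · filter_upwards [eventually_ge_atTop 1] with N hN
    have hN : (0 : ℝ) < N := by exact_mod_cast hN
    rw [le_div_iff₀ (by positivity)]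
    calc 1 / (k + 1) * (N : ℝ) ^ (k + 1) = (N : ℝ) ^ (k + 1) / (k + 1) := by ring
      _ ≤ _ := hlower N
  · filter_upwards [eventually_ge_atTop 1] with N hN
    have hN : (0 : ℝ) < N := by exact_mod_cast hN
    rw [div_le_iff₀ (by positivity)]
    calc _ ≤ _ := hupper N
      _ = (1 / (k + 1) + 1 / (N : ℝ)) * (N : ℝ) ^ (k + 1) := by
        field_simp
        ring

theorem tendsto_sum_mul_div_pow_of_abs_le {w : ℕ → ℝ} {c C : ℝ}
    (hw : ∀ J : ℕ, |w J * J ^ 2 - c * J| ≤ C) (k : ℕ) :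
    Tendsto (fun N : ℕ ↦ ∑ J ∈ range (N + 1), w J * ((J : ℝ) / N) ^ (k + 2)) atTop
      (𝓝 (c / (k + 2))) := by
  set e : ℕ → ℝ := fun J ↦ w J * J ^ 2 - c * J
  have hsplit (N : ℕ) : ∑ J ∈ range (N + 1), w J * ((J : ℝ) / N) ^ (k + 2) =
      c * ((∑ J ∈ range (N + 1), (J : ℝ) ^ (k + 1)) / (N : ℝ) ^ (k + 1 + 1)) +
        (∑ J ∈ range (N + 1), e J * (J : ℝ) ^ k) / (N : ℝ) ^ (k + 2) := by
    rw [mul_div_assoc', ← add_div, mul_sum, ← sum_add_distrib, sum_div]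
    refine sum_congr rfl fun J _ ↦ ?_
    simp only [e, div_pow]
    ring
  have hmain : Tendsto (fun N : ℕ ↦ c * ((∑ J ∈ range (N + 1), (J : ℝ) ^ (k + 1)) /
      (N : ℝ) ^ (k + 1 + 1))) atTop (𝓝 (c / (k + 2))) := by
    convert (tendsto_sum_range_succ_pow_div_pow (k + 1)).const_mul c using 2
    push_cast
    ring
  have herror : Tendsto (fun N : ℕ ↦ (∑ J ∈ range (N + 1), e J * (J : ℝ) ^ k) /
      (N : ℝ) ^ (k + 2)) atTop (𝓝 0) := by
    have hbound : Tendsto (fun N : ℕ ↦ C * (∑ J ∈ range (N + 1), (J : ℝ) ^ k) /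
        (N : ℝ) ^ (k + 2)) atTop (𝓝 0) := by
      have := ((tendsto_sum_range_succ_pow_div_pow k).const_mul C).mul
        (tendsto_one_div_atTop_nhds_zero_nat (𝕜 := ℝ))
      rw [mul_zero] at this
      refine this.congr fun N ↦ ?_
      ring
    refine squeeze_zero_norm (fun N ↦ ?_) hbound
    rw [norm_div, norm_pow, Real.norm_natCast]
    gcongr
    calc ‖∑ J ∈ range (N + 1), e J * (J : ℝ) ^ k‖ ≤ ∑ J ∈ range (N + 1), C * (J : ℝ) ^ k := by
          refine (norm_sum_le _ _).trans (sum_le_sum fun J _ ↦ ?_)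
          rw [norm_mul, norm_pow, Real.norm_natCast]
          exact mul_le_mul_of_nonneg_right (hw J) (by positivity)
      _ = C * ∑ J ∈ range (N + 1), (J : ℝ) ^ k := (mul_sum _ _ _).symm
  simpa [hsplit] using hmain.add herror

theorem abs_div_mul_sq_sub_two_mul_le (μ : ℝ) (J : ℕ) :
    |(2 * (J : ℝ) + 1) / (J * (J + 1) + μ ^ 2) * J ^ 2 - 2 * J| ≤ 1 + 2 * μ ^ 2 := by
  rcases J.eq_zero_or_pos with rfl | hJ
  · simp [add_nonneg, sq_nonneg]
  have hD : (0 : ℝ) < J * (J + 1) + μ ^ 2 := by positivity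
  have hx : (2 * (J : ℝ) + 1) / (J * (J + 1) + μ ^ 2) * J ^ 2 - 2 * J =
      -(J * (J + 2 * μ ^ 2) / (J * (J + 1) + μ ^ 2)) := by
    field_simp
    ring
  rw [hx, abs_neg, abs_of_nonneg (by positivity), div_le_iff₀ hD]
  nlinarith [mul_nonneg (sq_nonneg μ) (sq_nonneg (J : ℝ)), sq_nonneg μ, pow_two_nonneg (μ ^ 2)]

theorem nonplanar_difference_limit_general (L : ℕ) (μ : ℝ) :
    Tendsto (fun α : ℕ =>
        ∑ J ∈ Finset.range (2 * α + 1),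
          (2 * (J : ℝ) + 1) / ((J : ℝ) * ((J : ℝ) + 1) + μ ^ 2) *
            (legendreP L (1 - (J : ℝ) ^ 2 / (2 * (α : ℝ) ^ 2)) - 1))
      atTop (nhds (-2 * harmonicR L)) := by
  have hmoment (k : ℕ) : Tendsto (fun α : ℕ ↦ ∑ J ∈ range (2 * α + 1),
      (2 * (J : ℝ) + 1) / (J * (J + 1) + μ ^ 2) * ((J : ℝ) / (2 * α)) ^ (2 * k + 2)) atTop
      (𝓝 (1 / ((k : ℝ) + 1))) := by
    have := (tendsto_sum_mul_div_pow_of_abs_le (abs_div_mul_sq_sub_two_mul_le μ) (2 * k)).comp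
      (tendsto_id.const_mul_atTop' two_pos)
    rw [show (2 : ℝ) / ((2 * k : ℕ) + 2) = 1 / (k + 1) by push_cast; field_simp] at this
    refine this.congr fun α ↦ ?_
    simp only [Function.comp, id, Nat.cast_mul, Nat.cast_ofNat]
  have hlim := tendsto_finsetSum (range L) fun k _ ↦
    (hmoment k).const_mul ((shiftedLegendre L).coeff (k + 1) : ℝ)
  simp only [mul_one_div, sum_coeff_shiftedLegendre_div] at hlim
  refine hlim.congr fun α ↦ ?_
  simp only [legendreP_one_sub_sub_one, mul_sum]
  rw [sum_comm]
  refine sum_congr rfl fun J _ ↦ sum_congr rfl fun k _ ↦ ?_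
  have hpow : ((J : ℝ) / (2 * α)) ^ (2 * k + 2) =
      ((J : ℝ) ^ 2 / (2 * (α : ℝ) ^ 2) / 2) ^ (k + 1) := by
    rw [show 2 * k + 2 = 2 * (k + 1) by ring, pow_mul]
    ring
  rw [hpow]
  ring

/-- For every fixed `L ∈ ℕ` and `μ ≠ 0`, as the positive integer `α → ∞`,
`∑_{J=0}^{2α} (2J+1)/(J(J+1)+μ²) · (P_L(1 − J²/(2α²)) − 1)` converges to `−2·h(L)`. -/
theorem nonplanar_difference_limit (L : ℕ) (μ : ℝ) (hμ : μ ≠ 0) :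
    Tendsto (fun α : ℕ =>
        ∑ J ∈ Finset.range (2 * α + 1),
          (2 * (J : ℝ) + 1) / ((J : ℝ) * ((J : ℝ) + 1) + μ ^ 2) *
            (legendreP L (1 - (J : ℝ) ^ 2 / (2 * (α : ℝ) ^ 2)) - 1))
      atTop (nhds (-2 * harmonicR L)) :=
  nonplanar_difference_limit_general L μ
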